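/- Let l > 0 and let φ : ℝ → ℂ be continuously differentiable on the closed interval [-l, l]. Then for every x ∈ (-l, l) one has |φ(x)|² ≤ 2·(∫_{-l}^{l} |φ(y)|² dy)^{1/2} · (∫_{-l}^{l} |φ'(y)|² dy)^{1/2} + (2l)^{-1} · ∫_{-l}^{l} |φ(y)|² dy. -/

import Mathlib

/-!
Write `g = ‖φ‖²`, so that `g' = 2⟪φ, φ'⟫` and `|g'| ≤ 2‖φ‖‖φ'‖`. By the fundamental theorem of
calculus, `g x ≤ g y + 2 ∫ ‖φ‖‖φ'‖` for all `x, y` in the interval; averaging over `y` gives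
`g x ≤ 2 ∫ ‖φ‖‖φ'‖ + (b - a)⁻¹ ∫ g`, and Cauchy–Schwarz bounds `∫ ‖φ‖‖φ'‖`.
-/

open MeasureTheory Set

theorem integral_norm_mul_norm_le_sqrt_mul_sqrt {α E : Type*} [MeasurableSpace α] {μ : Measure α}
    [NormedAddCommGroup E] {f g : α → E} (hf : MemLp f 2 μ) (hg : MemLp g 2 μ) :
    ∫ a, ‖f a‖ * ‖g a‖ ∂μ ≤ √(∫ a, ‖f a‖ ^ 2 ∂μ) * √(∫ a, ‖g a‖ ^ 2 ∂μ) := by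
  simpa [Real.sqrt_eq_rpow] using integral_mul_norm_le_Lp_mul_Lq Real.HolderConjugate.two_two
    (by simpa using hf) (by simpa using hg)

theorem ContinuousOn.memLp_two_restrict_Ioo {E : Type*} [NormedAddCommGroup E] {a b : ℝ}
    {f : ℝ → E} (hf : ContinuousOn f (Icc a b)) :
    MemLp f 2 (volume.restrict (Ioo a b)) :=
  (memLp_two_iff_integrable_sq_norm
    ((hf.mono Ioo_subset_Icc_self).aestronglyMeasurable measurableSet_Ioo)).2
    ((hf.norm.pow 2).integrableOn_Icc.mono_set Ioo_subset_Icc_self)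

section Interval

variable {F : Type*} [NormedAddCommGroup F] [InnerProductSpace ℝ F] {a b : ℝ} {φ φ' : ℝ → F}

theorem norm_sq_sub_norm_sq_le_two_mul_integral (hderiv : ∀ t ∈ Ioo a b, HasDerivAt φ (φ' t) t)
    (hφ : ContinuousOn φ (Icc a b)) (hφ' : ContinuousOn φ' (Icc a b)) {x y : ℝ}
    (hx : x ∈ Ioo a b) (hy : y ∈ Ioo a b) :
    ‖φ x‖ ^ 2 - ‖φ y‖ ^ 2 ≤ 2 * ∫ t in Ioo a b, ‖φ t‖ * ‖φ' t‖ := by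
  have hyx : uIcc y x ⊆ Ioo a b := ordConnected_Ioo.uIcc_subset hy hx
  have hcont : ContinuousOn (fun t ↦ 2 * inner ℝ (φ t) (φ' t)) (Icc a b) :=
    continuousOn_const.mul (hφ.inner hφ')
  have hftc : ∫ t in y..x, 2 * inner ℝ (φ t) (φ' t) = ‖φ x‖ ^ 2 - ‖φ y‖ ^ 2 :=
    intervalIntegral.integral_eq_sub_of_hasDerivAt (fun t ht ↦ (hderiv t (hyx ht)).norm_sq)
      ((hcont.mono (hyx.trans Ioo_subset_Icc_self)).intervalIntegrable)
  rw [← hftc, ← integral_const_mul]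
  calc ∫ t in y..x, 2 * inner ℝ (φ t) (φ' t)
      ≤ ∫ t in uIoc y x, ‖2 * inner ℝ (φ t) (φ' t)‖ :=
        (Real.le_norm_self _).trans intervalIntegral.norm_integral_le_integral_norm_uIoc
    _ ≤ ∫ t in Ioo a b, ‖2 * inner ℝ (φ t) (φ' t)‖ :=
        setIntegral_mono_set (hcont.norm.integrableOn_Icc.mono_set Ioo_subset_Icc_self)
          (.of_forall fun _ ↦ norm_nonneg _) (uIoc_subset_uIcc.trans hyx).eventuallyLE
    _ ≤ ∫ t in Ioo a b, 2 * (‖φ t‖ * ‖φ' t‖) := by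
        refine setIntegral_mono_on
          (hcont.norm.integrableOn_Icc.mono_set Ioo_subset_Icc_self)
          ((continuousOn_const.mul (hφ.norm.mul hφ'.norm)).integrableOn_Icc.mono_set
            Ioo_subset_Icc_self) measurableSet_Ioo fun t _ ↦ ?_
        rw [norm_mul, Real.norm_two, Real.norm_eq_abs]
        exact mul_le_mul_of_nonneg_left (abs_real_inner_le_norm _ _) zero_le_two

theorem norm_sq_le_of_hasDerivAt_Ioo (hderiv : ∀ t ∈ Ioo a b, HasDerivAt φ (φ' t) t)
    (hφ : ContinuousOn φ (Icc a b)) (hφ' : ContinuousOn φ' (Icc a b)) {x : ℝ}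
    (hx : x ∈ Ioo a b) :
    ‖φ x‖ ^ 2 ≤
      2 * √(∫ y in Ioo a b, ‖φ y‖ ^ 2) * √(∫ y in Ioo a b, ‖φ' y‖ ^ 2) +
        (b - a)⁻¹ * ∫ y in Ioo a b, ‖φ y‖ ^ 2 := by
  have hab : a < b := hx.1.trans hx.2
  have havg := setIntegral_ge_of_const_le_real measurableSet_Ioo
    (measure_Ioo_lt_top (μ := volume)).ne
    (fun y hy ↦ sub_le_comm.1 (norm_sq_sub_norm_sq_le_two_mul_integral hderiv hφ hφ' hx hy))
    ((hφ.norm.pow 2).integrableOn_Icc.mono_set Ioo_subset_Icc_self)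
  have hCS := integral_norm_mul_norm_le_sqrt_mul_sqrt hφ.memLp_two_restrict_Ioo
    hφ'.memLp_two_restrict_Ioo
  rw [Real.volume_real_Ioo_of_le hab.le, ← le_div_iff₀ (sub_pos.2 hab)] at havg
  rw [inv_mul_eq_div]
  linarith

end Interval

theorem stmt_0 (l : ℝ) (φ φ' : ℝ → ℂ)
    (hdiff : ∀ x ∈ Icc (-l) l, HasDerivWithinAt φ (φ' x) (Icc (-l) l) x)
    (hcont : ContinuousOn φ' (Icc (-l) l)) :
    ∀ x ∈ Ioo (-l) l,
      ‖φ x‖ ^ 2 ≤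
        2 * Real.sqrt (∫ y in Ioo (-l) l, ‖φ y‖ ^ 2) *
            Real.sqrt (∫ y in Ioo (-l) l, ‖φ' y‖ ^ 2) +
          (2 * l)⁻¹ * ∫ y in Ioo (-l) l, ‖φ y‖ ^ 2 := by
  intro x hx
  have hderiv : ∀ t ∈ Ioo (-l) l, HasDerivAt φ (φ' t) t := fun t ht ↦
    (hdiff t (Ioo_subset_Icc_self ht)).hasDerivAt (Icc_mem_nhds ht.1 ht.2)
  have hφ : ContinuousOn φ (Icc (-l) l) := fun t ht ↦ (hdiff t ht).continuousWithinAt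
  have := norm_sq_le_of_hasDerivAt_Ioo hderiv hφ hcont hx
  rwa [sub_neg_eq_add, ← two_mul] at this
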